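/- Let Ω₃ := B(0,1) ∖ {(x,0) : −1 < x < 1} ⊆ ℝ² (the open unit disc with a full diameter removed). Then Ω₃ satisfies the weak local D₀-John condition for some D₀ ≥ 1, but Ω₃ satisfies neither the D₀-John condition nor the local D₀-John condition for any D₀ ≥ 1. -/

import Mathlib

/-! The slit splits `Ω₃` into the open upper and lower half discs, and on `Ω₃` the distance to the
boundary is `min |y| (1 - ‖X‖)`. By the intermediate value theorem, a path in `Ω₃` that starts off
the slit never changes the sign of its second coordinate, so no point of `Ω₃` can be joined to
points of both halves. This rules out the John condition (join the centre `X₀` to its mirror image)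
and the local John condition (join the local John point to both poles `(0, ±1)`, which lie in the
ball of radius `3/2` about the origin).

For the weak local John condition take `F` to be the boundary points of `Δ_X` on the closed side of
`X`. The segment from such a point to `X` is a `2`-non-tangential path, because along it
`min |y| (1 - ‖X‖)` is at least `t` times its value at `X`. The reflection in the horizontal axis is
an isometry of the boundary that maps `Δ_X \ F` into `F`, so `F` carries at least half of
`ℋ¹(Δ_X)`. -/

open Set Metric MeasureTheory
open scoped ENNReal NNReal

noncomputable section

/-- Euclidean space `ℝ^m`. -/
abbrev Euc (m : ℕ) : Type := EuclideanSpace ℝ (Fin m)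

variable {m : ℕ}

/-- `E ⊆ ℝ^m` is `d`-Ahlfors–David regular: `E` is closed and there is `D ≥ 1` with
`D⁻¹ rᵈ ≤ ℋᵈ(B(x,r) ∩ E) ≤ D rᵈ` for all `x ∈ E` and `0 < r < diam E`. -/
def IsADR (d : ℝ) (E : Set (Euc m)) : Prop :=
  IsClosed E ∧ ∃ D : ℝ, 1 ≤ D ∧ ∀ x ∈ E, ∀ r : ℝ, 0 < r →
    ENNReal.ofReal r < EMetric.diam E →
      ENNReal.ofReal (r ^ d / D) ≤ μH[d] (ball x r ∩ E) ∧
        μH[d] (ball x r ∩ E) ≤ ENNReal.ofReal (D * r ^ d)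

/-- The corkscrew condition for `Ω` with constant `c ∈ (0,1)`: for every `x ∈ ∂Ω` and
`0 < r < diam ∂Ω` there is `X ∈ Ω` with `B(X, c·r) ⊆ B(x,r) ∩ Ω`. -/
def CorkscrewWith (Ω : Set (Euc m)) (c : ℝ) : Prop :=
  ∀ x ∈ frontier Ω, ∀ r : ℝ, 0 < r → ENNReal.ofReal r < EMetric.diam (frontier Ω) →
    ∃ X ∈ Ω, ball X (c * r) ⊆ ball x r ∩ Ω

/-- The corkscrew condition (for some constant `c ∈ (0,1)`). -/
def Corkscrew (Ω : Set (Euc m)) : Prop := ∃ c : ℝ, 0 < c ∧ c < 1 ∧ CorkscrewWith Ω c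

/-- The 2-sided corkscrew condition: both `Ω` and `int (Ωᶜ)` satisfy the corkscrew condition. -/
def TwoSidedCorkscrew (Ω : Set (Euc m)) : Prop :=
  Corkscrew Ω ∧ Corkscrew (interior Ωᶜ)

/-- The distance between two sets. -/
def distSet (s t : Set (Euc m)) : ℝ := sInf {d : ℝ | ∃ x ∈ s, ∃ y ∈ t, d = dist x y}

/-- A path in `Ω`: a continuous map `γ : [0,1] → closure Ω` with `γ(t) ∈ Ω` for `t ∈ (0,1]`. -/
def IsPathIn (Ω : Set (Euc m)) (γ : ℝ → Euc m) : Prop :=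
  ContinuousOn γ (Icc 0 1) ∧ (∀ t ∈ Icc (0:ℝ) 1, γ t ∈ closure Ω) ∧
    ∀ t ∈ Ioc (0:ℝ) 1, γ t ∈ Ω

/-- The length (total variation) of a path `γ : [0,1] → ℝ^m`. -/
def pathLen (γ : ℝ → Euc m) : ℝ≥0∞ := eVariationOn γ (Icc 0 1)

/-- A `D`-non-tangential path in `Ω`: a path in `Ω` such that for every `t ∈ [0,1]` the length of
`γ` restricted to `[0,t]` is at most `D · dist(γ t, ∂Ω)`. -/
def IsNTPath (Ω : Set (Euc m)) (D : ℝ) (γ : ℝ → Euc m) : Prop :=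
  IsPathIn Ω γ ∧ ∀ t ∈ Icc (0:ℝ) 1,
    eVariationOn γ (Icc 0 t) ≤ ENNReal.ofReal (D * infDist (γ t) (frontier Ω))

/-- The `D₀`-John condition: there is `X₀ ∈ Ω` such that every `Y ∈ Ω` can be joined to `X₀` by a
`D₀`-non-tangential path in `Ω` from `Y` to `X₀`. -/
def JohnWith (Ω : Set (Euc m)) (D₀ : ℝ) : Prop :=
  ∃ X₀ ∈ Ω, ∀ Y ∈ Ω, ∃ γ : ℝ → Euc m, IsNTPath Ω D₀ γ ∧ γ 0 = Y ∧ γ 1 = X₀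

/-- The local `(D₀, R₀)`-John condition: for every `x ∈ ∂Ω` and `0 < r < R₀` there is a local John
point `Y ∈ B(x,r) ∩ Ω` with `B(Y, r/D₀) ⊆ Ω` such that every `z ∈ B(x,r) ∩ ∂Ω` can be joined to
`Y` by a `D₀`-non-tangential path in `Ω` of length at most `D₀ r`. -/
def LocalJohnWithin (Ω : Set (Euc m)) (D₀ R₀ : ℝ) : Prop :=
  ∀ x ∈ frontier Ω, ∀ r : ℝ, 0 < r → r < R₀ →
    ∃ Y ∈ ball x r ∩ Ω, ball Y (r / D₀) ⊆ Ω ∧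
      ∀ z ∈ ball x r ∩ frontier Ω, ∃ γ : ℝ → Euc m,
        IsNTPath Ω D₀ γ ∧ γ 0 = z ∧ γ 1 = Y ∧ pathLen γ ≤ ENNReal.ofReal (D₀ * r)

/-- The local `D₀`-John condition (i.e. the local `(D₀, diam ∂Ω)`-John condition). -/
def LocalJohnWith (Ω : Set (Euc m)) (D₀ : ℝ) : Prop :=
  ∀ x ∈ frontier Ω, ∀ r : ℝ, 0 < r → ENNReal.ofReal r < EMetric.diam (frontier Ω) →
    ∃ Y ∈ ball x r ∩ Ω, ball Y (r / D₀) ⊆ Ω ∧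
      ∀ z ∈ ball x r ∩ frontier Ω, ∃ γ : ℝ → Euc m,
        IsNTPath Ω D₀ γ ∧ γ 0 = z ∧ γ 1 = Y ∧ pathLen γ ≤ ENNReal.ofReal (D₀ * r)

/-- The weak local `D₀`-John condition, with surface measure `ℋᵈ` on `∂Ω`. -/
def WeakLocalJohnWith (d : ℝ) (Ω : Set (Euc m)) (D₀ : ℝ) : Prop :=
  ∃ θ : ℝ, 0 < θ ∧ θ ≤ 1 ∧ ∃ R : ℝ, 2 ≤ R ∧ ∀ X ∈ Ω,
    ∃ F : Set (Euc m), MeasurableSet F ∧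
      F ⊆ ball X (R * infDist X (frontier Ω)) ∩ frontier Ω ∧
      ENNReal.ofReal θ * μH[d] (ball X (R * infDist X (frontier Ω)) ∩ frontier Ω) ≤ μH[d] F ∧
      ∀ z ∈ F, ∃ γ : ℝ → Euc m, IsNTPath Ω D₀ γ ∧ γ 0 = z ∧ γ 1 = X ∧
        pathLen γ ≤ ENNReal.ofReal (D₀ * (R * infDist X (frontier Ω)))

/-- The Harnack chain condition: there are `C ≥ 1` and `M : ℝ → ℕ` such that any `X, X' ∈ Ω` with
`δ(X), δ(X') ≥ ρ` and `|X - X'| < Λ ρ` can be joined by a chain of at most `M Λ` open balls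
contained in `Ω`, consecutive balls intersecting, with `C⁻¹ diam Bₖ ≤ dist(Bₖ, ∂Ω) ≤ C diam Bₖ`. -/
def HarnackChain (Ω : Set (Euc m)) : Prop :=
  ∃ C : ℝ, 1 ≤ C ∧ ∃ M : ℝ → ℕ,
    ∀ ρ : ℝ, 0 < ρ → ∀ Λ : ℝ, 1 ≤ Λ → ∀ X ∈ Ω, ∀ X' ∈ Ω,
      ρ ≤ infDist X (frontier Ω) → ρ ≤ infDist X' (frontier Ω) → dist X X' < Λ * ρ →
      ∃ N : ℕ, 1 ≤ N ∧ N ≤ M Λ ∧ ∃ ctr : ℕ → Euc m, ∃ rad : ℕ → ℝ,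
        X ∈ ball (ctr 0) (rad 0) ∧ X' ∈ ball (ctr (N - 1)) (rad (N - 1)) ∧
        (∀ k < N, ball (ctr k) (rad k) ⊆ Ω) ∧
        (∀ k, k + 1 < N → (ball (ctr k) (rad k) ∩ ball (ctr (k + 1)) (rad (k + 1))).Nonempty) ∧
        (∀ k < N,
          C⁻¹ * Metric.diam (ball (ctr k) (rad k))
              ≤ distSet (ball (ctr k) (rad k)) (frontier Ω) ∧
            distSet (ball (ctr k) (rad k)) (frontier Ω)
              ≤ C * Metric.diam (ball (ctr k) (rad k)))

/-- A domain (connected open set) is NTA if it satisfies the Harnack chain condition and the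
2-sided corkscrew condition. -/
def IsNTA (Θ : Set (Euc m)) : Prop :=
  IsOpen Θ ∧ IsConnected Θ ∧ HarnackChain Θ ∧ TwoSidedCorkscrew Θ

/-- `Ω` is a chord-arc domain: NTA with `d`-ADR boundary. -/
def IsCAD (d : ℝ) (Ω : Set (Euc m)) : Prop := IsNTA Ω ∧ IsADR d (frontier Ω)

/-- `Ω` is a 2-sided chord-arc domain: a chord-arc domain such that `int (Ωᶜ)` is NTA. -/
def IsTwoSidedCAD (d : ℝ) (Ω : Set (Euc m)) : Prop := IsCAD d Ω ∧ IsNTA (interior Ωᶜ)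

/-- `E`, with the Euclidean metric, is quasiconvex: any two points of `E` can be joined by a path
in `E` of length at most `C` times their distance. -/
def QuasiconvexSet (E : Set (Euc m)) : Prop :=
  ∃ C : ℝ, 1 ≤ C ∧ ∀ x ∈ E, ∀ y ∈ E, ∃ γ : ℝ → Euc m,
    ContinuousOn γ (Icc 0 1) ∧ (∀ t ∈ Icc (0:ℝ) 1, γ t ∈ E) ∧ γ 0 = x ∧ γ 1 = y ∧
      eVariationOn γ (Icc 0 1) ≤ ENNReal.ofReal (C * dist x y)

/-- `E`, with the Euclidean metric, is annularly quasiconvex. -/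
def AnnularlyQuasiconvexSet (E : Set (Euc m)) : Prop :=
  ∃ C : ℝ, 1 ≤ C ∧ ∀ z ∈ E, ∀ r : ℝ, 0 < r →
    ENNReal.ofReal (C * r) < EMetric.diam E →
    ∀ x ∈ E ∩ (ball z (2 * r) \ ball z r), ∀ y ∈ E ∩ (ball z (2 * r) \ ball z r),
      ∃ γ : ℝ → Euc m, ContinuousOn γ (Icc 0 1) ∧
        (∀ t ∈ Icc (0:ℝ) 1, γ t ∈ E ∩ (ball z (C * r) \ ball z (r / C))) ∧
        γ 0 = x ∧ γ 1 = y ∧ eVariationOn γ (Icc 0 1) ≤ ENNReal.ofReal (C * dist x y)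

/-- `ρ` is an upper gradient of `f` on `E`: for every `1`-Lipschitz curve `γ : [0,L] → E` we have
`|f(γ 0) - f(γ L)| ≤ ∫₀ᴸ ρ(γ t) dt`. -/
def IsUpperGradientOn (f : Euc m → ℝ) (ρ : Euc m → ℝ≥0∞) (E : Set (Euc m)) : Prop :=
  ∀ L : ℝ, 0 ≤ L → ∀ γ : ℝ → Euc m, LipschitzOnWith 1 γ (Icc 0 L) →
    (∀ t ∈ Icc (0:ℝ) L, γ t ∈ E) →
    ENNReal.ofReal |f (γ 0) - f (γ L)| ≤ ∫⁻ t in Icc (0:ℝ) L, ρ (γ t)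

/-- `ϱ` is admissible for the pair `(E,F)` in `S`: `∫_γ ϱ ds ≥ 1` for every rectifiable
(`1`-Lipschitz parametrized) path in `S` connecting `E` and `F`. -/
def AdmissibleFor (S E F : Set (Euc m)) (ϱ : Euc m → ℝ≥0∞) : Prop :=
  ∀ L : ℝ, 0 < L → ∀ γ : ℝ → Euc m, LipschitzOnWith 1 γ (Icc 0 L) →
    (∀ t ∈ Icc (0:ℝ) L, γ t ∈ S) → γ 0 ∈ E → γ L ∈ F →
    1 ≤ ∫⁻ t in Icc (0:ℝ) L, ϱ (γ t)

/-- The `d`-modulus of the family of paths in `S` connecting `E` and `F`, w.r.t. measure `σ`. -/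
def modOn (σ : Measure (Euc m)) (S E F : Set (Euc m)) (d : ℝ) : ℝ≥0∞ :=
  sInf {v : ℝ≥0∞ | ∃ ϱ : Euc m → ℝ≥0∞, Measurable ϱ ∧ AdmissibleFor S E F ϱ ∧
    v = ∫⁻ x, ϱ x ^ d ∂σ}

/-- `L` is an affine hyperplane (affine subspace of codimension 1) of `ℝ^m`. -/
def IsAffineHyperplane (L : Set (Euc m)) : Prop :=
  ∃ A : AffineSubspace ℝ (Euc m), (A : Set (Euc m)) = L ∧
    Module.finrank ℝ A.direction + 1 = m

/-- The bilateral β-number `bβ_{∂Ω}(B(x,r), L)`. -/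
def bBeta (Ω : Set (Euc m)) (x : Euc m) (r : ℝ) (L : Set (Euc m)) : ℝ :=
  sSup ((fun y => infDist y L / r) '' (ball x r ∩ frontier Ω)) +
    sSup ((fun Y => infDist Y (frontier Ω) / r) '' (L ∩ ball x r))

/-- The open `c`-neighborhood `U_c(L)` of `L`. -/
def tubeNbhd (L : Set (Euc m)) (c : ℝ) : Set (Euc m) := {Y | infDist Y L < c}

/-- The open diameter `{(x,0) : -1 < x < 1} ⊆ ℝ²`. -/
def diamSeg : Set (Euc 2) := {p : Euc 2 | p 1 = 0 ∧ -1 < p 0 ∧ p 0 < 1}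

/-- `Ω₃ := B(0,1) ∖ {(x,0) : -1 < x < 1}`, the disc minus a full diameter. -/
def cutDisc : Set (Euc 2) := ball (0 : Euc 2) 1 \ diamSeg


theorem eVariationOn_lineMap_Icc_le {E : Type*} [NormedAddCommGroup E] [NormedSpace ℝ E]
    (x y : E) {t : ℝ} (ht : 0 ≤ t) :
    eVariationOn (AffineMap.lineMap x y : ℝ → E) (Icc 0 t) ≤ ENNReal.ofReal (t * dist x y) :=
  calc eVariationOn (AffineMap.lineMap x y ∘ id) (Icc 0 t)
      ≤ nndist x y * eVariationOn id (Icc 0 t) :=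
        (lipschitzWith_lineMap x y).lipschitzOnWith.comp_eVariationOn_le (mapsTo_univ _ _)
    _ = ENNReal.ofReal (t * dist x y) := by
        rw [eVariationOn_id_Icc, sub_zero, mul_comm, ENNReal.ofReal_mul ht, ← coe_nndist,
          ENNReal.ofReal_coe_nnreal]

theorem hausdorffMeasure_le_two_mul_inter_of_mapsTo {X : Type*} [EMetricSpace X]
    [MeasurableSpace X] [BorelSpace X] (e : X ≃ᵢ X) (d : ℝ) {s t : Set X}
    (h : MapsTo e (s \ t) (s ∩ t)) : μH[d] s ≤ 2 * μH[d] (s ∩ t) :=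
  calc μH[d] s ≤ μH[d] (s ∩ t) + μH[d] (s \ t) := measure_le_inter_add_sdiff _ _ _
    _ = μH[d] (s ∩ t) + μH[d] (e '' (s \ t)) := by rw [e.hausdorffMeasure_image]
    _ ≤ μH[d] (s ∩ t) + μH[d] (s ∩ t) := by gcongr; exact h.image_subset
    _ = 2 * μH[d] (s ∩ t) := (two_mul _).symm

theorem norm_euc_two (p : Euc 2) : ‖p‖ = √(p 0 ^ 2 + p 1 ^ 2) := by
  simp [EuclideanSpace.norm_eq, Fin.sum_univ_two]

theorem dist_euc_two (p q : Euc 2) : dist p q = √((p 0 - q 0) ^ 2 + (p 1 - q 1) ^ 2) := by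
  simp [EuclideanSpace.dist_eq, Fin.sum_univ_two, Real.dist_eq]

def reflectXAxis : Euc 2 ≃ᵢ Euc 2 where
  toFun p := !₂[p 0, -p 1]
  invFun p := !₂[p 0, -p 1]
  left_inv p := by ext i; fin_cases i <;> simp
  right_inv p := by ext i; fin_cases i <;> simp
  isometry_toFun := Isometry.of_dist_eq fun p q => by simp [dist_euc_two]; ring_nf

@[simp] theorem reflectXAxis_apply_zero (p : Euc 2) : reflectXAxis p 0 = p 0 := rfl

@[simp] theorem reflectXAxis_apply_one (p : Euc 2) : reflectXAxis p 1 = -p 1 := rfl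

@[simp] theorem norm_reflectXAxis (p : Euc 2) : ‖reflectXAxis p‖ = ‖p‖ := by
  simp [norm_euc_two]

theorem dist_reflectXAxis_le {z X : Euc 2} (h : z 1 * X 1 ≤ 0) :
    dist (reflectXAxis z) X ≤ dist z X := by
  rw [dist_euc_two, dist_euc_two]
  refine Real.sqrt_le_sqrt ?_
  simp only [reflectXAxis_apply_zero, reflectXAxis_apply_one]
  nlinarith

theorem mem_cutDisc {p : Euc 2} : p ∈ cutDisc ↔ ‖p‖ < 1 ∧ p 1 ≠ 0 := by
  simp only [cutDisc, diamSeg, mem_sdiff, mem_ball, dist_zero_right, mem_ofPred_eq]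
  refine and_congr_right fun hp => ⟨fun h h1 => h ⟨h1, ?_⟩, fun h hs => h hs.1⟩
  exact abs_lt.1 ((PiLp.norm_apply_le p 0).trans_lt hp)

theorem cutDisc_eq_ball_inter : cutDisc = ball 0 1 ∩ {p | p 1 ≠ 0} := by
  ext p; simp [mem_cutDisc]

theorem closure_cutDisc : closure cutDisc = closedBall 0 1 := by
  have hdense : Dense {p : Euc 2 | p 1 ≠ 0} :=
    (dense_compl_singleton (0 : ℝ)).preimage (PiLp.isOpenMap_apply 2 _ 1)
  refine (closure_minimal ?_ isClosed_closedBall).antisymm ?_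
  · exact fun p hp => mem_closedBall_zero_iff.2 (mem_cutDisc.1 hp).1.le
  · rw [← closure_ball 0 one_ne_zero, cutDisc_eq_ball_inter]
    exact closure_minimal (hdense.open_subset_closure_inter isOpen_ball) isClosed_closure

theorem isOpen_cutDisc : IsOpen cutDisc := by
  rw [cutDisc_eq_ball_inter]
  exact isOpen_ball.inter (isOpen_ne_fun (PiLp.continuous_apply 2 _ 1) continuous_const)

theorem mem_frontier_cutDisc {p : Euc 2} :
    p ∈ frontier cutDisc ↔ ‖p‖ ≤ 1 ∧ (p 1 = 0 ∨ ‖p‖ = 1) := by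
  rw [isOpen_cutDisc.frontier_eq, closure_cutDisc, mem_sdiff, mem_closedBall_zero_iff, mem_cutDisc]
  refine and_congr_right fun hp => ?_
  rw [hp.lt_iff_ne]
  tauto

theorem reflectXAxis_mem_cutDisc {p : Euc 2} (hp : p ∈ cutDisc) : reflectXAxis p ∈ cutDisc := by
  simpa [mem_cutDisc] using hp

theorem reflectXAxis_mem_frontier_cutDisc {p : Euc 2} (hp : p ∈ frontier cutDisc) :
    reflectXAxis p ∈ frontier cutDisc := by
  simpa [mem_frontier_cutDisc] using hp

theorem zero_mem_frontier_cutDisc : (0 : Euc 2) ∈ frontier cutDisc :=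
  mem_frontier_cutDisc.2 ⟨by simp, Or.inl rfl⟩

def slitDist (p : Euc 2) : ℝ := min |p 1| (1 - ‖p‖)

theorem slitDist_pos_iff {p : Euc 2} : 0 < slitDist p ↔ p ∈ cutDisc := by
  rw [slitDist, lt_min_iff, abs_pos, sub_pos, mem_cutDisc, and_comm]

theorem slitDist_le_infDist (p : Euc 2) : slitDist p ≤ infDist p (frontier cutDisc) := by
  refine (le_infDist ⟨0, zero_mem_frontier_cutDisc⟩).2 fun q hq => ?_
  rcases (mem_frontier_cutDisc.1 hq).2 with hq1 | hq1
  · calc slitDist p ≤ |p 1 - q 1| := by rw [hq1, sub_zero]; exact min_le_left _ _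
      _ ≤ dist p q := PiLp.dist_apply_le p q 1
  · calc slitDist p ≤ ‖q‖ - ‖p‖ := by rw [hq1]; exact min_le_right _ _
      _ ≤ dist p q := by rw [dist_comm, dist_eq_norm]; exact norm_sub_norm_le q p

theorem infDist_frontier_cutDisc {X : Euc 2} (hX : X ∈ cutDisc) :
    infDist X (frontier cutDisc) = slitDist X := by
  obtain ⟨hX1, hX2⟩ := mem_cutDisc.1 hX
  have hXpos : 0 < ‖X‖ := (abs_pos.2 hX2).trans_le (PiLp.norm_apply_le X 1)
  refine le_antisymm (le_min ?_ ?_) (slitDist_le_infDist X)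
  · have hfoot : (!₂[X 0, 0] : Euc 2) ∈ frontier cutDisc :=
      mem_frontier_cutDisc.2 ⟨by simpa [norm_euc_two] using (PiLp.norm_apply_le X 0).trans hX1.le,
        Or.inl rfl⟩
    calc infDist X (frontier cutDisc) ≤ dist X !₂[X 0, 0] := infDist_le_dist_of_mem hfoot
      _ = |X 1| := by simp [dist_euc_two, Real.sqrt_sq_eq_abs]
  · have hunit : ‖‖X‖⁻¹ • X‖ = 1 := by
      rw [norm_smul, norm_inv, norm_norm, inv_mul_cancel₀ hXpos.ne']
    have hproj : ‖X‖⁻¹ • X ∈ frontier cutDisc := mem_frontier_cutDisc.2 ⟨hunit.le, Or.inr hunit⟩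
    calc infDist X (frontier cutDisc) ≤ dist X (‖X‖⁻¹ • X) := infDist_le_dist_of_mem hproj
      _ = ‖(‖X‖⁻¹ - 1) • X‖ := by rw [dist_comm, dist_eq_norm, sub_smul, one_smul]
      _ = 1 - ‖X‖ := by
        have : 1 ≤ ‖X‖⁻¹ := (one_le_inv₀ hXpos).2 hX1.le
        rw [norm_smul, Real.norm_of_nonneg (by linarith), sub_mul, inv_mul_cancel₀ hXpos.ne',
          one_mul]

theorem mul_slitDist_le_slitDist_lineMap {z X : Euc 2} (hz : ‖z‖ ≤ 1) (hzX : 0 ≤ z 1 * X 1)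
    {t : ℝ} (ht : t ∈ Icc (0 : ℝ) 1) :
    t * slitDist X ≤ slitDist (AffineMap.lineMap z X t) := by
  obtain ⟨ht0, ht1⟩ := ht
  have hcoord : (AffineMap.lineMap z X t : Euc 2) 1 = (1 - t) * z 1 + t * X 1 := by
    simp [AffineMap.lineMap_apply_module]
  have hnorm : ‖(AffineMap.lineMap z X t : Euc 2)‖ ≤ (1 - t) * ‖z‖ + t * ‖X‖ := by
    rw [AffineMap.lineMap_apply_module]
    refine (norm_add_le _ _).trans_eq ?_
    rw [norm_smul, norm_smul, Real.norm_of_nonneg (sub_nonneg.2 ht1), Real.norm_of_nonneg ht0]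
  rw [slitDist, slitDist, mul_min_of_nonneg _ _ ht0]
  refine min_le_min ?_ (by nlinarith)
  rw [hcoord, ← abs_of_nonneg ht0, ← abs_mul, abs_of_nonneg ht0, ← sq_le_sq]
  nlinarith [mul_nonneg (mul_nonneg (sub_nonneg.2 ht1) ht0) hzX]

theorem isNTPath_lineMap_cutDisc {z X : Euc 2} (hz : z ∈ frontier cutDisc) (hX : X ∈ cutDisc)
    (hzX : 0 ≤ z 1 * X 1) {D : ℝ} (hD : dist z X ≤ D * infDist X (frontier cutDisc)) :
    IsNTPath cutDisc D (AffineMap.lineMap z X) := by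
  have hz1 : ‖z‖ ≤ 1 := (mem_frontier_cutDisc.1 hz).1
  have hδX : 0 < slitDist X := slitDist_pos_iff.2 hX
  rw [infDist_frontier_cutDisc hX] at hD
  have hD0 : 0 ≤ D := nonneg_of_mul_nonneg_left (dist_nonneg.trans hD) hδX
  have hmem : ∀ t ∈ Ioc (0 : ℝ) 1, AffineMap.lineMap z X t ∈ cutDisc := fun t ht =>
    slitDist_pos_iff.1 <| (mul_pos ht.1 hδX).trans_le <|
      mul_slitDist_le_slitDist_lineMap hz1 hzX (Ioc_subset_Icc_self ht)
  refine ⟨⟨AffineMap.lineMap_continuous.continuousOn, fun t ht => ?_, hmem⟩, fun t ht => ?_⟩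
  · rcases ht.1.eq_or_lt with rfl | ht0
    · simpa using frontier_subset_closure hz
    · exact subset_closure (hmem t ⟨ht0, ht.2⟩)
  · refine (eVariationOn_lineMap_Icc_le z X ht.1).trans (ENNReal.ofReal_le_ofReal ?_)
    calc t * dist z X ≤ D * (t * slitDist X) := by nlinarith [ht.1]
      _ ≤ D * slitDist (AffineMap.lineMap z X t) :=
        mul_le_mul_of_nonneg_left (mul_slitDist_le_slitDist_lineMap hz1 hzX ht) hD0
      _ ≤ D * infDist (AffineMap.lineMap z X t) (frontier cutDisc) :=
        mul_le_mul_of_nonneg_left (slitDist_le_infDist _) hD0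

theorem IsPathIn.coord_one_mul_pos_of_cutDisc {γ : ℝ → Euc 2} (hγ : IsPathIn cutDisc γ)
    (h0 : γ 0 1 ≠ 0) : 0 < γ 0 1 * γ 1 1 := by
  by_contra! hsign
  have hcont : ContinuousOn (fun t => γ t 1) (uIcc 0 1) := by
    rw [uIcc_of_le zero_le_one]
    exact (PiLp.continuous_apply 2 _ 1).comp_continuousOn hγ.1
  have hzero : (0 : ℝ) ∈ uIcc (γ 0 1) (γ 1 1) := by
    rcases le_total (γ 0 1) 0 with h | h
    · exact mem_uIcc.2 (Or.inl ⟨h, by nlinarith [h0.lt_of_le h]⟩)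
    · exact mem_uIcc.2 (Or.inr ⟨by nlinarith [h0.symm.lt_of_le h], h⟩)
  obtain ⟨t, ht, hγt⟩ := intermediate_value_uIcc hcont hzero
  rw [uIcc_of_le zero_le_one] at ht
  rcases ht.1.eq_or_lt with rfl | ht0
  · exact h0 hγt
  · exact (mem_cutDisc.1 (hγ.2.2 t ⟨ht0, ht.2⟩)).2 hγt

theorem weakLocalJohnWith_cutDisc : WeakLocalJohnWith 1 cutDisc 2 := by
  refine ⟨1 / 2, by norm_num, by norm_num, 2, le_rfl, fun X hX => ?_⟩
  set Δ := ball X (2 * infDist X (frontier cutDisc)) ∩ frontier cutDisc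
  have hF : MeasurableSet {z : Euc 2 | 0 ≤ z 1 * X 1} :=
    (isClosed_le continuous_const
      ((PiLp.continuous_apply 2 _ 1).mul continuous_const)).measurableSet
  have hreflect : MapsTo reflectXAxis (Δ \ {z | 0 ≤ z 1 * X 1}) (Δ ∩ {z | 0 ≤ z 1 * X 1}) := by
    rintro z ⟨⟨hzball, hz⟩, hopp⟩
    have hside : z 1 * X 1 < 0 := not_le.1 hopp
    refine ⟨⟨(dist_reflectXAxis_le hside.le).trans_lt hzball,
      reflectXAxis_mem_frontier_cutDisc hz⟩, ?_⟩
    change 0 ≤ -z 1 * X 1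
    linarith
  refine ⟨Δ ∩ {z | 0 ≤ z 1 * X 1},
    (measurableSet_ball.inter isClosed_frontier.measurableSet).inter hF, inter_subset_left, ?_, ?_⟩
  · rw [ENNReal.ofReal_div_of_pos two_pos, ENNReal.ofReal_one, ENNReal.ofReal_ofNat, one_div,
      ENNReal.inv_mul_le_iff two_ne_zero ENNReal.ofNat_ne_top]
    exact hausdorffMeasure_le_two_mul_inter_of_mapsTo reflectXAxis 1 hreflect
  · rintro z ⟨⟨hzball, hz⟩, hside⟩
    have hdist : dist z X ≤ 2 * infDist X (frontier cutDisc) := (mem_ball.1 hzball).le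
    refine ⟨_, isNTPath_lineMap_cutDisc hz hX hside hdist, AffineMap.lineMap_apply_zero _ _,
      AffineMap.lineMap_apply_one _ _, ?_⟩
    refine (eVariationOn_lineMap_Icc_le z X zero_le_one).trans (ENNReal.ofReal_le_ofReal ?_)
    linarith [infDist_nonneg (x := X) (s := frontier cutDisc)]

theorem not_johnWith_cutDisc (D₀ : ℝ) : ¬ JohnWith cutDisc D₀ := by
  rintro ⟨X₀, hX₀, hjohn⟩
  obtain ⟨γ, ⟨hγ, -⟩, hγ0, hγ1⟩ := hjohn _ (reflectXAxis_mem_cutDisc hX₀)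
  have hX₀1 : X₀ 1 ≠ 0 := (mem_cutDisc.1 hX₀).2
  have := hγ.coord_one_mul_pos_of_cutDisc (by simpa [hγ0] using hX₀1)
  rw [hγ0, hγ1, reflectXAxis_apply_one] at this
  nlinarith [sq_pos_of_ne_zero hX₀1]

theorem not_localJohnWith_cutDisc (D₀ : ℝ) : ¬ LocalJohnWith cutDisc D₀ := by
  have hpole (σ : ℝ) (hσ : |σ| = 1) :
      (!₂[0, σ] : Euc 2) ∈ ball 0 (3 / 2) ∩ frontier cutDisc := by
    have hnorm : ‖(!₂[0, σ] : Euc 2)‖ = 1 := by simp [norm_euc_two, Real.sqrt_sq_eq_abs, hσ]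
    exact ⟨by rw [mem_ball_zero_iff, hnorm]; norm_num,
      mem_frontier_cutDisc.2 ⟨hnorm.le, Or.inr hnorm⟩⟩
  have hdiam : ENNReal.ofReal (3 / 2) < Metric.ediam (frontier cutDisc) := by
    calc ENNReal.ofReal (3 / 2) < edist (!₂[0, 1] : Euc 2) !₂[0, -1] := by
          have h2 : dist (!₂[0, 1] : Euc 2) !₂[0, -1] = 2 := by
            rw [dist_euc_two, show (2 : ℝ) = √(2 ^ 2) from (Real.sqrt_sq two_pos.le).symm]
            norm_num
          rw [edist_dist, h2]
          exact (ENNReal.ofReal_lt_ofReal_iff two_pos).2 (by norm_num)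
      _ ≤ Metric.ediam (frontier cutDisc) :=
        Metric.edist_le_ediam_of_mem (hpole 1 (by simp)).2 (hpole (-1) (by simp)).2
  intro h
  obtain ⟨Y, -, -, hpaths⟩ := h 0 zero_mem_frontier_cutDisc (3 / 2) (by norm_num) hdiam
  have hside (σ : ℝ) (hσ : |σ| = 1) : 0 < σ * Y 1 := by
    obtain ⟨γ, ⟨hγ, -⟩, hγ0, hγ1, -⟩ := hpaths _ (hpole σ hσ)
    have hσ0 : σ ≠ 0 := by rintro rfl; simp at hσ
    simpa [hγ0, hγ1] using hγ.coord_one_mul_pos_of_cutDisc (by simpa [hγ0] using hσ0)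
  linarith [hside 1 (by simp), hside (-1) (by simp)]

/-- **Example 3.3 (3).** `Ω₃` satisfies the weak local John condition for some `D₀ ≥ 1`, but
satisfies neither the John condition nor the local John condition for any `D₀ ≥ 1`. -/
theorem cutDisc_weakLocalJohn_not_john_not_localJohn :
    (∃ D₀ : ℝ, 1 ≤ D₀ ∧ WeakLocalJohnWith 1 cutDisc D₀) ∧
    ∀ D₀ : ℝ, 1 ≤ D₀ → ¬ JohnWith cutDisc D₀ ∧ ¬ LocalJohnWith cutDisc D₀ :=
  ⟨⟨2, one_le_two, weakLocalJohnWith_cutDisc⟩,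
    fun D₀ _ => ⟨not_johnWith_cutDisc D₀, not_localJohnWith_cutDisc D₀⟩⟩

end
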